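/- If 0 < α ≤ α_s := 1/(4|v_min|(1+v_min)), then X(v*,k) → 0 as k → ∞. -/

import Mathlib

open Filter

/-- Account value `X(v,k)` for feedback gain `α`, initial value `X0`, path `v`. -/
noncomputable def accountX (α X0 : ℝ) (v : ℕ → ℝ) : ℕ → ℝ
  | 0 => X0
  | 1 => X0
  | (k + 2) => accountX α X0 v (k + 1) + α * (1 + v k) * v (k + 1) * accountX α X0 v k

/-- The distinguished path: `v*(0) = v_max` and `v*(k) = v_min` for `k ≥ 1`. -/
noncomputable def vstar (vmin vmax : ℝ) : ℕ → ℝ := fun k => if k = 0 then vmax else vmin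

/-!
Along `v*` the feedback coefficient is constant from the second step on, so
`X(k+2) = X(k+1) - c X(k)` with `c = α |v_min| (1 + v_min)`, and `0 < α ≤ α_s` means exactly
`0 < c ≤ 1/4`. The characteristic polynomial `t² - t + c` then has the real roots
`r, s = (1 ± √(1 - 4c)) / 2`, both in `(0, 1)`. For any recurrence with real characteristic
roots `r, s` the sequence `u (n+1) - r u n` is geometric with ratio `s`, which gives
`|u (n+1)| ≤ (a + b n) ρⁿ` with `ρ = max |r| |s|`; so the solution tends to `0` once `ρ < 1`.
-/

open Topology

namespace FactoredRecurrence

variable {r s : ℝ} {u : ℕ → ℝ}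

/-- `u` solves the recurrence with characteristic polynomial `(t - r) (t - s)`. -/
def IsSolution (r s : ℝ) (u : ℕ → ℝ) : Prop :=
  ∀ n, u (n + 2) = (r + s) * u (n + 1) - r * s * u n

theorem sub_mul_eq_pow_mul (hu : IsSolution r s u) (n : ℕ) :
    u (n + 1) - r * u n = s ^ n * (u 1 - r * u 0) := by
  induction n with
  | zero => simp
  | succ n ih =>
    rw [pow_succ, mul_comm (s ^ n) s, mul_assoc, ← ih, hu n]
    ring

theorem abs_succ_le_of_abs_roots_le {ρ : ℝ} (hu : IsSolution r s u) (hr : |r| ≤ ρ) (hs : |s| ≤ ρ) (n : ℕ) :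
    |u (n + 1)| ≤ (ρ * |u 0| + (n + 1) * |u 1 - r * u 0|) * ρ ^ n := by
  have hρ : 0 ≤ ρ := (abs_nonneg r).trans hr
  induction n with
  | zero =>
    calc |u (0 + 1)| = |r * u 0 + (u 1 - r * u 0)| := by ring_nf
      _ ≤ ρ * |u 0| + |u 1 - r * u 0| := by
          grw [abs_add_le, abs_mul, hr]
      _ = _ := by ring
  | succ n ih =>
    have hstep : u (n + 2) = r * u (n + 1) + s ^ (n + 1) * (u 1 - r * u 0) := by
      rw [← sub_mul_eq_pow_mul hu]; ring
    have hpow : |s ^ (n + 1)| ≤ ρ ^ (n + 1) := by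
      rw [abs_pow]; exact pow_le_pow_left₀ (abs_nonneg s) hs _
    calc |u (n + 2)|
        ≤ |r| * |u (n + 1)| + |s ^ (n + 1)| * |u 1 - r * u 0| := by
          rw [hstep, ← abs_mul, ← abs_mul]; exact abs_add_le _ _
      _ ≤ ρ * ((ρ * |u 0| + (n + 1) * |u 1 - r * u 0|) * ρ ^ n)
            + ρ ^ (n + 1) * |u 1 - r * u 0| := by gcongr
      _ = (ρ * |u 0| + ((n + 1 : ℕ) + 1) * |u 1 - r * u 0|) * ρ ^ (n + 1) := by
          push_cast; ring

theorem tendsto_zero (hu : IsSolution r s u) (hr : |r| < 1) (hs : |s| < 1) :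
    Tendsto u atTop (𝓝 0) := by
  set ρ := max |r| |s|
  have hρ0 : 0 ≤ ρ := (abs_nonneg r).trans (le_max_left _ _)
  have hρ1 : ρ < 1 := max_lt hr hs
  set A := ρ * |u 0| + |u 1 - r * u 0|
  set B := |u 1 - r * u 0|
  have hgeom := tendsto_pow_atTop_nhds_zero_of_lt_one hρ0 hρ1
  have hbound : Tendsto (fun n : ℕ => A * ρ ^ n + B * (n * ρ ^ n)) atTop (𝓝 0) := by
    simpa using (hgeom.const_mul A).add
      ((tendsto_self_mul_const_pow_of_lt_one hρ0 hρ1).const_mul B)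
  rw [← tendsto_add_atTop_iff_nat 1]
  refine squeeze_zero_norm (fun n => ?_) hbound
  calc ‖u (n + 1)‖ ≤ (ρ * |u 0| + (n + 1) * B) * ρ ^ n :=
        abs_succ_le_of_abs_roots_le hu (le_max_left _ _) (le_max_right _ _) n
    _ = A * ρ ^ n + B * (n * ρ ^ n) := by ring

end FactoredRecurrence

theorem tendsto_zero_of_recurrence_of_le_quarter {c : ℝ} {u : ℕ → ℝ} (hc0 : 0 < c) (hc : c ≤ 1 / 4)
    (hu : ∀ n, u (n + 2) = u (n + 1) - c * u n) : Tendsto u atTop (𝓝 0) := by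
  set d := √(1 - 4 * c)
  have hd0 : 0 ≤ d := Real.sqrt_nonneg _
  have hd1 : d < 1 := by
    rw [Real.sqrt_lt' one_pos]; linarith
  have hd2 : d ^ 2 = 1 - 4 * c := Real.sq_sqrt (by linarith)
  refine FactoredRecurrence.tendsto_zero (r := (1 + d) / 2) (s := (1 - d) / 2) (fun n => ?_)
    (by rw [abs_lt]; constructor <;> linarith) (by rw [abs_lt]; constructor <;> linarith)
  rw [hu n]
  linear_combination (-u n / 4) * hd2

theorem accountX_vstar_add_three (α X0 vmin vmax : ℝ) (k : ℕ) :
    accountX α X0 (vstar vmin vmax) (k + 3) =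
      accountX α X0 (vstar vmin vmax) (k + 2)
        + α * (1 + vmin) * vmin * accountX α X0 (vstar vmin vmax) (k + 1) := by
  rw [accountX]
  simp only [vstar, Nat.add_eq_zero_iff, one_ne_zero, and_false, if_false]

theorem distinguished_path_tendsto_zero_general (vmin vmax α X0 : ℝ)
    (h1 : -1 < vmin) (h2 : vmin < 0)
    (hα0 : 0 < α) (hα : α ≤ 1 / (4 * |vmin| * (1 + vmin))) :
    Tendsto (fun k => accountX α X0 (vstar vmin vmax) k) atTop (nhds 0) := by
  have hpos : 0 < |vmin| * (1 + vmin) := mul_pos (abs_pos.mpr h2.ne) (by linarith)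
  have hquarter : α * (|vmin| * (1 + vmin)) ≤ 1 / 4 := by
    rw [le_div_iff₀ (by linarith)] at hα
    linarith
  rw [← tendsto_add_atTop_iff_nat 1]
  refine tendsto_zero_of_recurrence_of_le_quarter (mul_pos hα0 hpos) hquarter fun n => ?_
  rw [accountX_vstar_add_three, abs_of_neg h2]
  ring

/-- If `0 < α ≤ α_s = 1/(4|v_min|(1+v_min))`, then `X(v*,k) → 0` as `k → ∞`. -/
theorem distinguished_path_tendsto_zero (vmin vmax α X0 : ℝ)
    (h1 : -1 < vmin) (h2 : vmin < 0) (h3 : 0 < vmax) (hX0 : 0 < X0)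
    (hα0 : 0 < α) (hα : α ≤ 1 / (4 * |vmin| * (1 + vmin))) :
    Tendsto (fun k => accountX α X0 (vstar vmin vmax) k) atTop (nhds 0) :=
  distinguished_path_tendsto_zero_general vmin vmax α X0 h1 h2 hα0 hα
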